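/- arXiv:2303.03880 — 2 statements merged into one kernel-verified Lean document; each statement's English description precedes it below -/
import Mathlib

section
/- Fix a packet size d > 0 and a blocklength m > 0. Define V(γ) = 1 − (1+γ)^{−2}, C(γ) = log₂(1+γ), ω(γ) = √(m / V(γ)) · (C(γ) − d/m) · ln 2, and Q(x) = ∫ₓ^∞ (1/√(2π)) e^{−t²/2} dt. Then the decoding error probability ε(γ) = Q(ω(γ)) is strictly monotonically decreasing in the SNR γ on (0, ∞); consequently, for a receiver with channel gain |h|² > 0 and noise power σ² > 0, ε is strictly decreasing in the transmit power p via γ = p|h|²/σ². -/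
/-- The Gaussian Q-function `Q(x) = ∫ₓ^∞ (1/√(2π)) e^{−t²/2} dt`. -/
noncomputable def gaussianQ (x : ℝ) : ℝ :=
  ∫ t in Set.Ioi x, (Real.sqrt (2 * Real.pi))⁻¹ * Real.exp (-t ^ 2 / 2)

/-- Shannon capacity `C(γ) = log₂(1+γ)`. -/
noncomputable def Cap (γ : ℝ) : ℝ := Real.logb 2 (1 + γ)

/-- Channel dispersion `V(γ) = 1 − (1+γ)^{−2}`. -/
noncomputable def Vdisp (γ : ℝ) : ℝ := 1 - ((1 + γ) ^ 2)⁻¹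

/-- The finite-blocklength auxiliary function
`ω(m,γ) = √(m / V(γ)) · (C(γ) − d/m) · ln 2`. -/
noncomputable def ωfbl (d γ m : ℝ) : ℝ :=
  Real.sqrt (m / Vdisp γ) * (Cap γ - d / m) * Real.log 2

/-! Q is strictly decreasing, being the tail integral of the positive standard normal density,
so it suffices that ω increases in γ. With `a = 1 + γ` and `k = d ln 2 / m`,
`ω = √m · a (ln a − k) / √(a² − 1)`, whose derivative in `a` is
`√m (a² − 1 − ln a + k) / (a² − 1)^{3/2}`, positive because `ln a ≤ a − 1 < a² − 1`.
The transmit-power claim follows as `γ = p|h|²/σ²` is increasing in `p`. -/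

open MeasureTheory ProbabilityTheory Real Set

theorem strictAnti_integral_Ioi {f : ℝ → ℝ} (hf : Integrable f) (hpos : ∀ t, 0 < f t) :
    StrictAnti fun x => ∫ t in Ioi x, f t := by
  intro x y hxy
  have hsplit : ∫ t in Ioi x, f t = (∫ t in Ioc x y, f t) + ∫ t in Ioi y, f t := by
    rw [← setIntegral_union (Ioc_disjoint_Ioi le_rfl) measurableSet_Ioi hf.integrableOn
      hf.integrableOn, Ioc_union_Ioi_eq_Ioi hxy.le]
  have hIoc : 0 < ∫ t in Ioc x y, f t := by
    rw [← intervalIntegral.integral_of_le hxy.le]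
    exact intervalIntegral.intervalIntegral_pos_of_pos_on hf.intervalIntegrable
      (fun t _ => hpos t) hxy
  simp only
  linarith

theorem gaussianQ_eq_integral_gaussianPDFReal (x : ℝ) :
    gaussianQ x = ∫ t in Ioi x, gaussianPDFReal 0 1 t := by
  simp [gaussianQ, gaussianPDFReal]

theorem gaussianQ_strictAnti : StrictAnti gaussianQ := by
  rw [show gaussianQ = _ from funext gaussianQ_eq_integral_gaussianPDFReal]
  exact strictAnti_integral_Ioi (integrable_gaussianPDFReal 0 1)
      (fun t => gaussianPDFReal_pos 0 1 t one_ne_zero)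

theorem hasDerivAt_mul_log_sub_div_sqrt (k : ℝ) {a : ℝ} (ha : 1 < a) :
    HasDerivAt (fun a => a * (log a - k) / √(a ^ 2 - 1))
      ((a ^ 2 - 1 - (log a - k)) / √(a ^ 2 - 1) ^ 3) a := by
  have ha0 : a ≠ 0 := by positivity
  have hq : 0 < a ^ 2 - 1 := by nlinarith
  have hs : 0 < √(a ^ 2 - 1) := sqrt_pos.2 hq
  have hnum : HasDerivAt (fun a => a * (log a - k)) (log a - k + 1) a := by
    refine ((hasDerivAt_id' a).fun_mul ((hasDerivAt_log ha0).sub_const k)).congr_deriv ?_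
    field_simp
  have hden : HasDerivAt (fun a => √(a ^ 2 - 1)) (2 * a ^ 1 / (2 * √(a ^ 2 - 1))) a := by
    simpa using ((hasDerivAt_pow 2 a).sub_const 1).sqrt hq.ne'
  refine (hnum.div hden hs.ne').congr_deriv ?_
  field_simp
  rw [sq_sqrt hq.le]
  ring

theorem strictMonoOn_mul_log_sub_div_sqrt {k : ℝ} (hk : 0 ≤ k) :
    StrictMonoOn (fun a => a * (log a - k) / √(a ^ 2 - 1)) (Ioi 1) := by
  refine strictMonoOn_of_deriv_pos (convex_Ioi 1)
    (fun a ha => (hasDerivAt_mul_log_sub_div_sqrt k ha).continuousAt.continuousWithinAt)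
    (fun a ha => ?_)
  rw [interior_Ioi] at ha
  have ha : 1 < a := ha
  rw [(hasDerivAt_mul_log_sub_div_sqrt k ha).deriv]
  have hlog : log a ≤ a - 1 := log_le_sub_one_of_pos (by positivity)
  have hq : 0 < a ^ 2 - 1 := by nlinarith
  have : 0 < a ^ 2 - 1 - (log a - k) := by nlinarith
  positivity

theorem ωfbl_eq_sqrt_mul (d : ℝ) {γ m : ℝ} (hγ : -1 < γ) (hm : 0 ≤ m) :
    ωfbl d γ m = √m * ((1 + γ) * (log (1 + γ) - d * log 2 / m) / √((1 + γ) ^ 2 - 1)) := by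
  have ha : 0 < 1 + γ := by linarith
  have hV : Vdisp γ = ((1 + γ) ^ 2 - 1) / (1 + γ) ^ 2 := by
    rw [Vdisp]
    field_simp
  have hl2 : log 2 ≠ 0 := by positivity
  rw [ωfbl, Cap, logb, hV, div_div_eq_mul_div, sqrt_div (by positivity), sqrt_mul hm, sqrt_sq ha.le]
  field_simp

theorem ωfbl_strictMonoOn {d m : ℝ} (hd : 0 ≤ d) (hm : 0 < m) :
    StrictMonoOn (fun γ => ωfbl d γ m) (Ioi 0) := by
  intro x hx y hy hxy
  have hx : 0 < x := hx
  have hy : 0 < y := hy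
  simp only
  rw [ωfbl_eq_sqrt_mul d (by linarith) hm.le, ωfbl_eq_sqrt_mul d (by linarith) hm.le]
  refine mul_lt_mul_of_pos_left ?_ (sqrt_pos.2 hm)
  exact strictMonoOn_mul_log_sub_div_sqrt (by positivity) (by simpa using hx) (by simpa using hy)
    (by linarith)

/-- For fixed packet size `d > 0` and blocklength `m > 0`, the FBL decoding
error probability `ε(γ) = Q(ω(γ))` is strictly decreasing in the SNR `γ` on `(0, ∞)`;
consequently, for channel gain `|h|² > 0` and noise power `σ² > 0`, it is strictly
decreasing in the transmit power `p` via `γ = p|h|²/σ²`. -/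
theorem statement1 (d m : ℝ) (hd : 0 < d) (hm : 0 < m) :
    StrictAntiOn (fun γ => gaussianQ (ωfbl d γ m)) (Set.Ioi (0 : ℝ)) ∧
    ∀ hsq σsq : ℝ, 0 < hsq → 0 < σsq →
      StrictAntiOn (fun p => gaussianQ (ωfbl d (p * hsq / σsq) m)) (Set.Ioi (0 : ℝ)) := by
  have hsnr : StrictAntiOn (fun γ => gaussianQ (ωfbl d γ m)) (Ioi 0) :=
    gaussianQ_strictAnti.comp_strictMonoOn (ωfbl_strictMonoOn hd.le hm)
  refine ⟨hsnr, fun hsq σsq hh hσ => ?_⟩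
  have hpower : StrictMono fun p : ℝ => p * hsq / σsq := fun p q hpq => by dsimp only; gcongr
  exact hsnr.comp_strictMonoOn (hpower.strictMonoOn _)
    fun p (hp : 0 < p) => show 0 < p * hsq / σsq by positivity
end

section
/- Fix a packet size d > 0 and an SNR γ > 0, and let ω(m) = √(m / V(γ)) · (C(γ) − d/m) · ln 2 with C(γ) = log₂(1+γ) and V(γ) = 1 − (1+γ)^{−2}. Then the second derivative of ω with respect to m equals −(ln 2 / 4) · m^{−3/2} · V(γ)^{−1/2} · (C(γ) + 3d/m) ≤ 0 for all m > 0; in particular, m ↦ ω(m) is concave on (0, ∞). -/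
/-!
On `(0, ∞)` we have `ω(m) = (ln 2 / √V) · (C √m − d / √m)`, a positive multiple of
`a √m − b m^{-1/2}` with `a = C ≥ 0` and `b = d > 0`. Differentiating twice gives
`−(a + 3b/m) / (4 m √m) ≤ 0`, and a function with nonpositive second derivative on an
interval is concave.
-/

open Real Filter Set

lemma Vdisp_pos {γ : ℝ} (hγ : 0 < γ) : 0 < Vdisp γ := by
  have : ((1 + γ) ^ 2)⁻¹ < 1 := inv_lt_one_of_one_lt₀ (by nlinarith)
  unfold Vdisp
  linarith

lemma Cap_pos {γ : ℝ} (hγ : 0 < γ) : 0 < Cap γ :=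
  logb_pos one_lt_two (by linarith)

section SqrtCombination

variable (a b : ℝ) {x : ℝ}

lemma hasDerivAt_mul_sqrt_sub_div_sqrt (hx : 0 < x) :
    HasDerivAt (fun y => a * √y - b / √y) (a / (2 * √x) + b / (2 * (x * √x))) x := by
  have hs : 0 < √x := sqrt_pos.2 hx
  have hsqrt : HasDerivAt sqrt (1 / (2 * √x)) x := hasDerivAt_sqrt hx.ne'
  refine ((hsqrt.const_mul a).sub ((hasDerivAt_const x b).fun_div hsqrt hs.ne')).congr_deriv ?_
  obtain ⟨s, s_pos, rfl⟩ : ∃ s, 0 < s ∧ x = s ^ 2 := ⟨√x, hs, (sq_sqrt hx.le).symm⟩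
  rw [sqrt_sq s_pos.le]
  field_simp
  ring

lemma hasDerivAt_div_two_sqrt_add_div_two_mul_sqrt (hx : 0 < x) :
    HasDerivAt (fun y => a / (2 * √y) + b / (2 * (y * √y)))
      (-(a + 3 * b / x) / (4 * (x * √x))) x := by
  have hs : 0 < √x := sqrt_pos.2 hx
  have hsqrt : HasDerivAt sqrt (1 / (2 * √x)) x := hasDerivAt_sqrt hx.ne'
  have hA := (hasDerivAt_const x a).fun_div (hsqrt.const_mul 2) (by positivity)
  have hB := (hasDerivAt_const x b).fun_div (((hasDerivAt_id' x).fun_mul hsqrt).const_mul 2)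
    (by positivity)
  refine (hA.add hB).congr_deriv ?_
  obtain ⟨s, s_pos, rfl⟩ : ∃ s, 0 < s ∧ x = s ^ 2 := ⟨√x, hs, (sq_sqrt hx.le).symm⟩
  rw [sqrt_sq s_pos.le]
  field_simp
  ring

end SqrtCombination

section Omega

variable {d γ x : ℝ}

lemma ωfbl_eq (hx : 0 < x) :
    ωfbl d γ x = (log 2 / √(Vdisp γ)) * (Cap γ * √x - d / √x) := by
  obtain ⟨s, s_pos, rfl⟩ : ∃ s, 0 < s ∧ x = s ^ 2 := ⟨√x, sqrt_pos.2 hx, (sq_sqrt hx.le).symm⟩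
  rw [ωfbl, sqrt_div hx.le, sqrt_sq s_pos.le]
  field_simp

lemma hasDerivAt_ωfbl (hx : 0 < x) :
    HasDerivAt (ωfbl d γ)
      ((log 2 / √(Vdisp γ)) * (Cap γ / (2 * √x) + d / (2 * (x * √x)))) x := by
  refine ((hasDerivAt_mul_sqrt_sub_div_sqrt _ _ hx).const_mul _).congr_of_eventuallyEq ?_
  filter_upwards [Ioi_mem_nhds hx] with y hy
  exact ωfbl_eq hy

lemma hasDerivAt_deriv_ωfbl (hx : 0 < x) :
    HasDerivAt (deriv (ωfbl d γ))
      (-(log 2 / 4) * (x * √x)⁻¹ * (√(Vdisp γ))⁻¹ * (Cap γ + 3 * d / x)) x := by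
  have h := (hasDerivAt_div_two_sqrt_add_div_two_mul_sqrt (Cap γ) d hx).const_mul
    (log 2 / √(Vdisp γ))
  refine (h.congr_deriv (by ring)).congr_of_eventuallyEq ?_
  filter_upwards [Ioi_mem_nhds hx] with y hy
  exact (hasDerivAt_ωfbl hy).deriv

lemma second_deriv_ωfbl_nonpos (hd : 0 ≤ d) (hγ : 0 < γ) (hx : 0 < x) :
    -(log 2 / 4) * (x * √x)⁻¹ * (√(Vdisp γ))⁻¹ * (Cap γ + 3 * d / x) ≤ 0 := by
  have := Cap_pos hγ
  have := Vdisp_pos hγ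
  rw [neg_mul, neg_mul, neg_mul, neg_nonpos]
  positivity

end Omega

/-- For fixed `d > 0` and `γ > 0`, the second derivative of `m ↦ ω(m)`
equals `−(ln 2 / 4) · m^{−3/2} · V(γ)^{−1/2} · (C(γ) + 3d/m) ≤ 0` for all `m > 0`;
in particular `m ↦ ω(m)` is concave on `(0, ∞)`. -/
theorem statement7 (d γ : ℝ) (hd : 0 < d) (hγ : 0 < γ) :
    (∀ m > (0 : ℝ),
      deriv (deriv (fun x => ωfbl d γ x)) m =
        -(Real.log 2 / 4) * (m * Real.sqrt m)⁻¹ * (Real.sqrt (Vdisp γ))⁻¹ *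
          (Cap γ + 3 * d / m) ∧
      deriv (deriv (fun x => ωfbl d γ x)) m ≤ 0) ∧
    ConcaveOn ℝ (Set.Ioi (0 : ℝ)) (fun x => ωfbl d γ x) := by
  have second_deriv : ∀ m > (0 : ℝ), deriv (deriv (ωfbl d γ)) m =
      -(log 2 / 4) * (m * √m)⁻¹ * (√(Vdisp γ))⁻¹ * (Cap γ + 3 * d / m) :=
    fun m hm => (hasDerivAt_deriv_ωfbl hm).deriv
  have second_deriv_nonpos : ∀ m > (0 : ℝ), deriv (deriv (ωfbl d γ)) m ≤ 0 := fun m hm =>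
    (second_deriv m hm).symm ▸ second_deriv_ωfbl_nonpos hd.le hγ hm
  refine ⟨fun m hm => ⟨second_deriv m hm, second_deriv_nonpos m hm⟩, ?_⟩
  exact concaveOn_of_deriv2_nonpos' (convex_Ioi 0)
    (fun x hx => (hasDerivAt_ωfbl hx).differentiableAt.differentiableWithinAt)
    (fun x hx => (hasDerivAt_deriv_ωfbl hx).differentiableAt.differentiableWithinAt)
    second_deriv_nonpos
end
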